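/- arXiv:1703.00641 — 4 statements merged into one kernel-verified Lean document; each statement's English description precedes it below -/
import Mathlib

section
/- There exist universal constants c₁, c₂ > 0 such that for every δ ∈ (0,1), if N₁ ≥ max{c₁ b², c₂ σ²/Δ²} · log(1/δ), then with probability at least 1 − 6δ the midpoint (μ₁+μ₂)/2 is the unique minimizer of |ȳ − μ| over μ ∈ 𝔻⁺, i.e., |ȳ − (μ₁+μ₂)/2| < |ȳ − μ| for every μ ∈ 𝔻⁺ with μ ≠ (μ₁+μ₂)/2. -/
/-! Write `ȳ − (μ₁ + μ₂)/2 = ((μ₂ − μ₁) ∑ (z_i − 1/2) + ∑ w_i) / N₁`. The centred coin flips are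
`1/4`-sub-Gaussian (Hoeffding's lemma) and the `w_i` are `σ²`-sub-Gaussian, so by Hoeffding's
inequality, once `N₁ ≥ 128 max(b², σ²/Δ²) log(1/δ)`, with probability at least `1 − 4δ` both
`|∑ (z_i − 1/2)| < N₁/(16b)` and `|∑ w_i| < N₁Δ/8`. As `|μ₂ − μ₁| ≤ 2bΔ`, this gives
`|ȳ − (μ₁ + μ₂)/2| < Δ/4`, half the spacing of the grid `𝔻⁺`, which contains the midpoint. -/

open MeasureTheory ProbabilityTheory Real
open scoped NNReal ENNReal

namespace ProbabilityTheory

variable {Ω : Type*} {mΩ : MeasurableSpace Ω} {P : Measure Ω}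

lemma hasSubgaussianMGF_of_map_eq_gaussianReal {X : Ω → ℝ} {v : ℝ≥0}
    (hX : P.map X = gaussianReal 0 v) : HasSubgaussianMGF X v P where
  integrable_exp_mul t := by
    have hXm : AEMeasurable X P := aemeasurable_of_map_neZero (by rw [hX]; infer_instance)
    refine (integrable_map_measure (g := fun x ↦ exp (t * x)) (by fun_prop) hXm).mp ?_
    rw [hX]
    exact integrable_exp_mul_gaussianReal t
  mgf_le t := by rw [mgf_gaussianReal hX]; simp

noncomputable def fairCoin : Measure ℝ :=
  (1/2 : ℝ≥0∞) • Measure.dirac 1 + (1/2 : ℝ≥0∞) • Measure.dirac 0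

instance : IsProbabilityMeasure fairCoin :=
  ⟨by simp [fairCoin, ENNReal.inv_two_add_inv_two]⟩

lemma integral_id_fairCoin : ∫ x, x ∂fairCoin = 1/2 := by
  rw [fairCoin, integral_add_measure, integral_smul_measure, integral_smul_measure]
  · simp
  all_goals exact (integrable_dirac (by simp)).smul_measure (by simp)

lemma ae_mem_Icc_fairCoin : ∀ᵐ x ∂fairCoin, x ∈ Set.Icc (0 : ℝ) 1 := by
  simp [fairCoin, ae_add_measure_iff]

lemma hasSubgaussianMGF_sub_half_fairCoin :
    HasSubgaussianMGF (fun x : ℝ ↦ x - 1/2) (1/4) fairCoin := by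
  have h := hasSubgaussianMGF_of_mem_Icc aemeasurable_id ae_mem_Icc_fairCoin
  simp only [id, integral_id_fairCoin] at h
  convert h using 1
  norm_num

lemma hasSubgaussianMGF_sub_half_of_map_eq_fairCoin {X : Ω → ℝ} (hX : P.map X = fairCoin) :
    HasSubgaussianMGF (fun ω ↦ X ω - 1/2) (1/4) P := by
  have hXm : AEMeasurable X P := aemeasurable_of_map_neZero (by rw [hX]; infer_instance)
  exact (hX ▸ hasSubgaussianMGF_sub_half_fairCoin).of_map hXm

lemma measureReal_abs_sum_ge_le_of_iIndepFun {ι : Type*} {X : ι → Ω → ℝ}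
    (h_indep : iIndepFun X P) {c : ι → ℝ≥0} {s : Finset ι}
    (h_subG : ∀ i ∈ s, HasSubgaussianMGF (X i) (c i) P) {ε : ℝ} (hε : 0 ≤ ε) :
    P.real {ω | ε ≤ |∑ i ∈ s, X i ω|} ≤ 2 * exp (-ε ^ 2 / (2 * ∑ i ∈ s, c i)) := by
  have := h_indep.isProbabilityMeasure
  have h_neg : iIndepFun (fun i ω ↦ -X i ω) P :=
    h_indep.comp (fun _ x ↦ -x) fun _ ↦ measurable_neg
  have h_split : {ω | ε ≤ |∑ i ∈ s, X i ω|}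
      ⊆ {ω | ε ≤ ∑ i ∈ s, X i ω} ∪ {ω | ε ≤ ∑ i ∈ s, -X i ω} := by
    intro ω (hω : ε ≤ |_|)
    simpa only [Set.mem_union, Set.mem_ofPred_eq, Finset.sum_neg_distrib] using le_abs.mp hω
  calc P.real {ω | ε ≤ |∑ i ∈ s, X i ω|}
      ≤ P.real {ω | ε ≤ ∑ i ∈ s, X i ω} + P.real {ω | ε ≤ ∑ i ∈ s, -X i ω} :=
        (measureReal_mono h_split).trans (measureReal_union_le _ _)
    _ ≤ _ := by
        rw [two_mul]
        gcongr
        · exact HasSubgaussianMGF.measure_sum_ge_le_of_iIndepFun h_indep h_subG hε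
        · exact HasSubgaussianMGF.measure_sum_ge_le_of_iIndepFun h_neg
            (fun i hi ↦ (h_subG i hi).neg) hε

lemma measureReal_abs_sum_ge_card_mul_le {ι : Type*} [Fintype ι] [Nonempty ι]
    {X : ι → Ω → ℝ} (h_indep : iIndepFun X P) {c : ℝ≥0} (hc : 0 < c)
    (h_subG : ∀ i, HasSubgaussianMGF (X i) c P) {t δ : ℝ} (ht : 0 < t) (hδ : 0 < δ)
    (hn : 2 * (c : ℝ) / t ^ 2 * log (1 / δ) ≤ Fintype.card ι) :
    P.real {ω | Fintype.card ι * t ≤ |∑ i, X i ω|} ≤ 2 * δ := by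
  have hn_pos : (0 : ℝ) < Fintype.card ι := by exact_mod_cast Fintype.card_pos
  set n : ℝ := (Fintype.card ι : ℝ)
  have hc' : (0 : ℝ) < c := hc
  have h_exponent : log (1 / δ) ≤ (n * t) ^ 2 / (2 * (n * c)) := by
    rw [le_div_iff₀ (by positivity)]
    rw [div_mul_eq_mul_div, div_le_iff₀ (by positivity)] at hn
    nlinarith
  calc P.real {ω | n * t ≤ |∑ i, X i ω|}
      ≤ 2 * exp (-(n * t) ^ 2 / (2 * ∑ _i : ι, c)) :=
        measureReal_abs_sum_ge_le_of_iIndepFun h_indep (fun i _ ↦ h_subG i) (by positivity)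
    _ = 2 * exp (-((n * t) ^ 2 / (2 * (n * c)))) := by simp [n, neg_div]
    _ ≤ 2 * exp (-log (1 / δ)) := by gcongr
    _ = 2 * δ := by rw [one_div, log_inv, neg_neg, exp_log hδ]

lemma ofReal_one_sub_add_le_measure [IsProbabilityMeasure P] {A B T : Set Ω} {a b : ℝ}
    (hA : P.real A ≤ a) (hB : P.real B ≤ b) (hT : ∀ ω, ω ∉ A → ω ∉ B → ω ∈ T) :
    ENNReal.ofReal (1 - (a + b)) ≤ P T := by
  have h_compl : Tᶜ ⊆ A ∪ B := fun ω hω ↦ by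
    by_contra h
    simp only [Set.mem_union, not_or] at h
    exact hω (hT ω h.1 h.2)
  have h_cover : 1 ≤ P.real T + P.real Tᶜ := by
    simpa using measureReal_union_le (μ := P) T Tᶜ
  rw [← ofReal_measureReal]
  refine ENNReal.ofReal_le_ofReal ?_
  linarith [(measureReal_mono (μ := P) h_compl).trans (measureReal_union_le A B)]

end ProbabilityTheory

lemma abs_sub_lt_abs_sub_of_abs_sub_lt_half {h y : ℝ} {j k : ℤ} (hjk : j ≠ k)
    (hy : |y - j * h| < h / 2) : |y - j * h| < |y - k * h| := by
  have hh : 0 < h := by linarith [abs_nonneg (y - j * h)]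
  have hkj : (1 : ℝ) ≤ |(k : ℝ) - j| := by
    exact_mod_cast Int.one_le_abs (sub_ne_zero.mpr hjk.symm)
  have h_sep : h ≤ |k * h - j * h| := by
    rw [← sub_mul, abs_mul, abs_of_pos hh]
    nlinarith
  have h_tri := abs_sub_le (k * h) y (j * h)
  rw [abs_sub_comm (k * h) y] at h_tri
  linarith

lemma abs_intCast_mul_sub_intCast_mul_le {k₁ k₂ : ℤ} {b : ℕ} {Δ : ℝ} (hΔ : 0 ≤ Δ)
    (hk₁ : |k₁| ≤ b) (hk₂ : |k₂| ≤ b) : |k₂ * Δ - k₁ * Δ| ≤ 2 * b * Δ := by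
  have h₁ : |(k₁ : ℝ)| ≤ b := by exact_mod_cast hk₁
  have h₂ : |(k₂ : ℝ)| ≤ b := by exact_mod_cast hk₂
  rw [← sub_mul, abs_mul, abs_of_nonneg hΔ]
  nlinarith [abs_sub (k₂ : ℝ) k₁]

lemma mixture_mean_sub_midpoint {n : ℕ} (hn : n ≠ 0) (μ₁ μ₂ : ℝ) (z w : Fin n → ℝ) :
    (1 / (n : ℝ)) * ∑ i, (μ₁ * (1 - z i) + μ₂ * z i + w i) - (μ₁ + μ₂) / 2
      = ((μ₂ - μ₁) * ∑ i, (z i - 1 / 2) + ∑ i, w i) / n := by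
  simp only [Finset.sum_add_distrib, Finset.sum_sub_distrib, ← Finset.mul_sum,
    Finset.sum_const, Finset.card_univ, Fintype.card_fin, nsmul_eq_mul]
  field_simp
  ring

lemma abs_mixture_mean_sub_midpoint_lt {n b : ℕ} (hn : n ≠ 0) (hb : 0 < b) {Δ μ₁ μ₂ : ℝ}
    (hΔ : 0 < Δ) (hμ : |μ₂ - μ₁| ≤ 2 * b * Δ) {z w : Fin n → ℝ}
    (hz : |∑ i, (z i - 1 / 2)| < n * (1 / (16 * b))) (hw : |∑ i, w i| < n * (Δ / 8)) :
    |(1 / (n : ℝ)) * ∑ i, (μ₁ * (1 - z i) + μ₂ * z i + w i) - (μ₁ + μ₂) / 2| < Δ / 4 := by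
  have hn' : (0 : ℝ) < n := by positivity
  have hb' : (0 : ℝ) < b := by exact_mod_cast hb
  rw [mixture_mean_sub_midpoint hn, abs_div, abs_of_pos hn', div_lt_iff₀ hn']
  calc |(μ₂ - μ₁) * ∑ i, (z i - 1 / 2) + ∑ i, w i|
      ≤ |μ₂ - μ₁| * |∑ i, (z i - 1 / 2)| + |∑ i, w i| :=
        (abs_add_le _ _).trans (by rw [abs_mul])
    _ < 2 * b * Δ * (n * (1 / (16 * b))) + n * (Δ / 8) :=
        add_lt_add_of_le_of_lt (by gcongr) hw
    _ = Δ / 4 * n := by field_simp; ring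

/-- There exist universal constants `c₁, c₂ > 0` such that for every `δ ∈ (0,1)`,
if `N₁ ≥ max{c₁b², c₂σ²/Δ²}·log(1/δ)`, then with probability at least `1 − 6δ` the midpoint
`(μ₁+μ₂)/2` is the unique minimizer of `|ȳ − μ|` over `μ ∈ 𝔻⁺ = {kΔ/2 : |k| ≤ 2b}`. -/
theorem midpoint_unique_minimizer :
    ∃ c₁ c₂ : ℝ, 0 < c₁ ∧ 0 < c₂ ∧
      ∀ (Ω : Type) (_ : MeasurableSpace Ω) (P : Measure Ω), IsProbabilityMeasure P →
      ∀ (Δ σ : ℝ) (b N₁ : ℕ) (μ₁ μ₂ δ : ℝ) (z w : Fin N₁ → Ω → ℝ),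
        0 < Δ → 0 < σ → 0 < b → 0 < N₁ → δ ∈ Set.Ioo (0 : ℝ) 1 →
        (∃ k : ℤ, |k| ≤ (b : ℤ) ∧ μ₁ = (k : ℝ) * Δ) →
        (∃ k : ℤ, |k| ≤ (b : ℤ) ∧ μ₂ = (k : ℝ) * Δ) →
        iIndepFun (Sum.elim z w) P →
        (∀ i, Measure.map (z i) P =
          (1/2 : ENNReal) • Measure.dirac (1 : ℝ) + (1/2 : ENNReal) • Measure.dirac (0 : ℝ)) →
        (∀ i, Measure.map (w i) P = gaussianReal 0 (Real.toNNReal (σ ^ 2))) →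
        (N₁ : ℝ) ≥ max (c₁ * (b : ℝ) ^ 2) (c₂ * σ ^ 2 / Δ ^ 2) * Real.log (1 / δ) →
        P {ω | ∀ μ : ℝ, (∃ k : ℤ, |k| ≤ 2 * (b : ℤ) ∧ μ = (k : ℝ) * Δ / 2) →
              μ ≠ (μ₁ + μ₂) / 2 →
              |(1 / (N₁ : ℝ)) * ∑ i, (μ₁ * (1 - z i ω) + μ₂ * z i ω + w i ω)
                  - (μ₁ + μ₂) / 2|
                < |(1 / (N₁ : ℝ)) * ∑ i, (μ₁ * (1 - z i ω) + μ₂ * z i ω + w i ω) - μ|}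
          ≥ ENNReal.ofReal (1 - 6 * δ) := by
  refine ⟨128, 128, by norm_num, by norm_num, ?_⟩
  rintro Ω _ P _ Δ σ b N₁ μ₁ μ₂ δ z w hΔ hσ hb hN ⟨hδ, hδ1⟩ ⟨k₁, hk₁, rfl⟩ ⟨k₂, hk₂, rfl⟩
    hindep hz hw hN₁
  have : Nonempty (Fin N₁) := ⟨⟨0, hN⟩⟩
  rw [ge_iff_le, max_mul_of_nonneg _ _ (log_nonneg (one_le_one_div hδ hδ1.le)), max_le_iff]
    at hN₁
  have hz_tail := measureReal_abs_sum_ge_card_mul_le (t := 1 / (16 * b))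
    ((hindep.precomp Sum.inl_injective).comp (fun _ x ↦ x - 1 / 2) fun _ ↦ measurable_sub_const _)
    (by norm_num) (fun i ↦ hasSubgaussianMGF_sub_half_of_map_eq_fairCoin (hz i)) (by positivity)
    hδ (by rw [Fintype.card_fin]; refine le_of_eq_of_le ?_ hN₁.1; push_cast; field_simp; ring)
  have hw_tail := measureReal_abs_sum_ge_card_mul_le (t := Δ / 8)
    (hindep.precomp Sum.inr_injective) (by positivity : 0 < (σ ^ 2).toNNReal)
    (fun i ↦ hasSubgaussianMGF_of_map_eq_gaussianReal (hw i)) (by positivity) hδ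
    (by
      rw [Fintype.card_fin, Real.coe_toNNReal _ (sq_nonneg σ)]
      exact le_of_eq_of_le (by field_simp; ring) hN₁.2)
  refine (ENNReal.ofReal_le_ofReal (by linarith)).trans
    (ofReal_one_sub_add_le_measure hz_tail hw_tail fun ω hzω hwω μ ⟨k, _, hμ⟩ hμm ↦ ?_)
  have h_mean := abs_mixture_mean_sub_midpoint_lt hN.ne' hb hΔ
    (abs_intCast_mul_sub_intCast_mul_le hΔ.le hk₁ hk₂)
    (not_le.mp (by simpa using hzω)) (not_le.mp (by simpa using hwω))
  have h_mid : (k₁ * Δ + k₂ * Δ) / 2 = ((k₁ + k₂ : ℤ) : ℝ) * (Δ / 2) := by push_cast; ring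
  rw [hμ, mul_div_assoc] at hμm ⊢
  rw [h_mid] at h_mean hμm ⊢
  exact abs_sub_lt_abs_sub_of_abs_sub_lt_half (fun h ↦ hμm (by rw [h])) (by linarith)
end

section
/- For every a ∈ ℤ with 1 ≤ |a| ≤ b and every j ∈ {1,…,n}, if x ≠ aΔ·e_j (where e_j is the j-th standard basis vector of ℝⁿ), then P( V x = aΔ·v_j ) ≤ 2·exp(−P₂/24). -/
/-!
Put `c := x - aΔ·e_{j₀}`, which is nonzero. The event says that every row `vᵢ` of `V` satisfies
`⟨vᵢ, c⟩ = 0`. The rows are independent, so the probability is the product over the rows. In one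
row, choose `k` with `c k ≠ 0`: the variable `c k · V i k` is independent of the rest of the sum
and has atoms of mass at most `1/2`, so `P(⟨vᵢ, c⟩ = 0) ≤ 1/2`. Finally
`2⁻¹ ^ P₂ ≤ exp (-P₂/24)`, because `1/2 ≤ 1 - 1/24 ≤ exp (-1/24)`.
-/

open MeasureTheory Measure ProbabilityTheory Real

namespace ProbabilityTheory

variable {Ω : Type*} {mΩ : MeasurableSpace Ω} {P : Measure Ω}

lemma iIndepFun.curry {ι κ 𝓧 : Type*} [Countable ι] [Countable κ] [MeasurableSpace 𝓧]
    {X : ι × κ → Ω → 𝓧} (hX : ∀ p, AEMeasurable (X p) P) (h : iIndepFun X P) :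
    iIndepFun (fun i ω j ↦ X (i, j) ω) P := by
  have := h.isProbabilityMeasure
  have hrow : ∀ i, iIndepFun (fun j ↦ X (i, j)) P :=
    fun i ↦ h.precomp (Prod.mk_right_injective i)
  have hXrow : ∀ i, AEMeasurable (fun ω j ↦ X (i, j) ω) P :=
    fun i ↦ aemeasurable_pi_iff.2 fun j ↦ hX (i, j)
  have : ∀ p, IsProbabilityMeasure (P.map (X p)) := fun p ↦ isProbabilityMeasure_map (hX p)
  rw [iIndepFun_iff_map_fun_eq_infinitePi_map₀' hXrow]
  have hjoint : AEMeasurable (fun ω p ↦ X p ω) P := aemeasurable_pi_iff.2 hX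
  calc P.map (fun ω i j ↦ X (i, j) ω)
      = (P.map (fun ω p ↦ X p ω)).map (MeasurableEquiv.curry ι κ 𝓧) :=
        (AEMeasurable.map_map_of_aemeasurable
          (MeasurableEquiv.curry ι κ 𝓧).measurable.aemeasurable hjoint).symm
    _ = infinitePi fun i ↦ infinitePi fun j ↦ P.map (X (i, j)) := by
        rw [(iIndepFun_iff_map_fun_eq_infinitePi_map₀' hX).1 h]
        exact infinitePi_map_curry (fun i j ↦ P.map (X (i, j)))
    _ = infinitePi fun i ↦ P.map (fun ω j ↦ X (i, j) ω) := by
        congr! 2 with i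
        exact ((iIndepFun_iff_map_fun_eq_infinitePi_map₀' fun j ↦ hX (i, j)).1 (hrow i)).symm

lemma IndepFun.measure_add_eq_le [IsProbabilityMeasure P] {Y Z : Ω → ℝ}
    (hY : AEMeasurable Y P) (hZ : AEMeasurable Z P) (hYZ : IndepFun Y Z P) {q : ENNReal}
    (hq : ∀ z, P.map Z {z} ≤ q) (t : ℝ) :
    P {ω | Y ω + Z ω = t} ≤ q := by
  have hS : MeasurableSet {p : ℝ × ℝ | p.1 + p.2 = t} :=
    measurableSet_eq_fun (by fun_prop) measurable_const
  have : IsProbabilityMeasure (P.map Y) := isProbabilityMeasure_map hY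
  calc P {ω | Y ω + Z ω = t}
      = P.map (fun ω ↦ (Y ω, Z ω)) {p | p.1 + p.2 = t} :=
        (map_apply_of_aemeasurable (hY.prodMk hZ) hS).symm
    _ = ∫⁻ y, P.map Z (Prod.mk y ⁻¹' {p | p.1 + p.2 = t}) ∂P.map Y := by
        rw [(indepFun_iff_map_prod_eq_prod_map_map hY hZ).1 hYZ, Measure.prod_apply hS]
    _ ≤ ∫⁻ _, q ∂P.map Y := by
        refine lintegral_mono fun y ↦ ?_
        have : Prod.mk y ⁻¹' {p : ℝ × ℝ | p.1 + p.2 = t} = {t - y} := by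
          ext z; simp [eq_sub_iff_add_eq']
        simpa only [this] using hq (t - y)
    _ = q := by simp

lemma map_const_mul_apply_singleton {X : Ω → ℝ} (hX : AEMeasurable X P) {c : ℝ} (hc : c ≠ 0)
    (y : ℝ) : P.map (fun ω ↦ c * X ω) {y} = P.map X {y / c} := by
  rw [map_apply_of_aemeasurable (hX.const_mul c) (measurableSet_singleton y),
    map_apply_of_aemeasurable hX (measurableSet_singleton _)]
  congr 1
  ext ω
  simp [eq_div_iff hc, mul_comm]

lemma iIndepFun.measure_sum_mul_eq_le [IsProbabilityMeasure P] {ι : Type*} [Fintype ι]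
    {X : ι → Ω → ℝ} (hX : ∀ i, AEMeasurable (X i) P) (h : iIndepFun X P) {c : ι → ℝ} {k : ι}
    (hk : c k ≠ 0) {q : ENNReal} (hq : ∀ y, P.map (X k) {y} ≤ q) (t : ℝ) :
    P {ω | ∑ i, c i * X i ω = t} ≤ q := by
  classical
  set Y : ι → Ω → ℝ := fun i ω ↦ c i * X i ω
  have hY : ∀ i, AEMeasurable (Y i) P := fun i ↦ (hX i).const_mul (c i)
  have hindep : IndepFun (∑ i ∈ Finset.univ.erase k, Y i) (Y k) P :=
    (h.comp (fun i x ↦ c i * x) fun i ↦ measurable_const_mul (c i)).indepFun_finsetSum_of_notMem₀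
      hY (Finset.notMem_erase k _)
  have hsplit : ∀ ω, ∑ i, c i * X i ω = (∑ i ∈ Finset.univ.erase k, Y i) ω + Y k ω := fun ω ↦ by
    rw [Finset.sum_apply, Finset.sum_erase_add _ _ (Finset.mem_univ k)]
  simp only [hsplit]
  refine hindep.measure_add_eq_le (Finset.aemeasurable_sum _ fun i _ ↦ hY i) (hY k) (fun y ↦ ?_) t
  rw [map_const_mul_apply_singleton (hX k) hk]
  exact hq _

lemma rademacher_apply_singleton_le (y : ℝ) :
    ((1/2 : ENNReal) • Measure.dirac (1 : ℝ) + (1/2 : ENNReal) • Measure.dirac (-1 : ℝ)) {y}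
      ≤ 1/2 := by
  by_cases h1 : y = 1
  · subst h1; norm_num
  · by_cases h2 : y = -1
    · subst h2; norm_num
    · simp [Set.indicator, Ne.symm h1, Ne.symm h2]

lemma inv_two_pow_le_ofReal_two_mul_exp (m : ℕ) :
    (2⁻¹ : ENNReal) ^ m ≤ ENNReal.ofReal (2 * exp (-(m : ℝ) / 24)) := by
  have half_le : (2⁻¹ : ℝ) ≤ exp (-1 / 24) := by linarith [add_one_le_exp (-1 / 24 : ℝ)]
  have : (2⁻¹ : ℝ) ^ m ≤ exp (-(m : ℝ) / 24) := by
    calc (2⁻¹ : ℝ) ^ m ≤ exp (-1 / 24) ^ m := by gcongr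
      _ = exp (-(m : ℝ) / 24) := by rw [← exp_nat_mul]; ring_nf
  rw [← ENNReal.ofReal_ofNat 2, ← ENNReal.ofReal_inv_of_pos two_pos,
    ← ENNReal.ofReal_pow (by norm_num)]
  exact ENNReal.ofReal_le_ofReal (by linarith [exp_pos (-(m : ℝ) / 24)])

end ProbabilityTheory

open ProbabilityTheory

theorem singleton_verification_general
    {Ω : Type} [MeasurableSpace Ω] (P : Measure Ω) [IsProbabilityMeasure P]
    (Δ : ℝ)
    (P₂ n : ℕ) (V : Fin P₂ → Fin n → Ω → ℝ)
    (hindep : iIndepFun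
      (fun p : Fin P₂ × Fin n => V p.1 p.2) P)
    (hdist : ∀ i j, Measure.map (V i j) P =
      (1/2 : ENNReal) • Measure.dirac (1 : ℝ) + (1/2 : ENNReal) • Measure.dirac (-1 : ℝ))
    (h : Fin n → ℝ)
    (β : Fin n → ℝ)
    (a : ℤ) (j₀ : Fin n)
    (hx : (fun j => h j * β j) ≠ (fun j => if j = j₀ then (a : ℝ) * Δ else 0)) :
    P {ω | ∀ i : Fin P₂, ∑ j, V i j ω * (h j * β j) = (a : ℝ) * Δ * V i j₀ ω}
      ≤ ENNReal.ofReal (2 * Real.exp (-(P₂ : ℝ) / 24)) := by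
  have hV : ∀ i j, AEMeasurable (V i j) P := fun i j ↦
    .of_map_ne_zero (by simp [hdist, ← measure_univ_eq_zero])
  set c : Fin n → ℝ := fun j ↦ h j * β j - if j = j₀ then (a : ℝ) * Δ else 0
  obtain ⟨k, hk⟩ : ∃ k, c k ≠ 0 := by
    simpa [c, sub_eq_zero, funext_iff] using hx
  have hevent : {ω | ∀ i : Fin P₂, ∑ j, V i j ω * (h j * β j) = (a : ℝ) * Δ * V i j₀ ω}
      = ⋂ i, (fun ω j ↦ V i j ω) ⁻¹' {v | ∑ j, c j * v j = 0} := by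
    have hrow : ∀ i ω, ∑ j, c j * V i j ω
        = ∑ j, V i j ω * (h j * β j) - (a : ℝ) * Δ * V i j₀ ω := fun i ω ↦ by
      simp only [c, sub_mul, Finset.sum_sub_distrib, ite_mul, zero_mul, Finset.sum_ite_eq',
        Finset.mem_univ, if_true, mul_comm (h _ * β _)]
    ext ω
    simp only [Set.mem_ofPred_eq, Set.mem_iInter, Set.mem_preimage, hrow, sub_eq_zero]
  have hrows : iIndepFun (fun i ω j ↦ V i j ω) P := hindep.curry fun p ↦ hV p.1 p.2
  rw [hevent, hrows.meas_iInter fun i ↦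
    ⟨_, measurableSet_eq_fun (by fun_prop) measurable_const, rfl⟩]
  calc ∏ i, P ((fun ω j ↦ V i j ω) ⁻¹' {v | ∑ j, c j * v j = 0})
      ≤ ∏ _i : Fin P₂, (2⁻¹ : ENNReal) := by
        refine Finset.prod_le_prod' fun i _ ↦ ?_
        refine (hindep.precomp (Prod.mk_right_injective i)).measure_sum_mul_eq_le (hV i) hk
          (fun y ↦ ?_) 0
        simpa [hdist] using rademacher_apply_singleton_le y
    _ ≤ _ := by
        rw [Finset.prod_const, Finset.card_univ, Fintype.card_fin]
        exact inv_two_pow_le_ofReal_two_mul_exp P₂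

/-- Let `V` be a `P₂ × n` matrix with i.i.d. Rademacher entries, `h ∈ {0,1}ⁿ`,
`β` a vector with all coordinates in `𝔻 = {kΔ : 1 ≤ |k| ≤ b}`, and `x = diag(h)β`. For any
`a ∈ ℤ` with `1 ≤ |a| ≤ b` and any coordinate `j`, if `x ≠ aΔ·e_j` then
`P(Vx = aΔ·v_j) ≤ 2·exp(−P₂/24)`, where `v_j` is the `j`-th column of `V`. -/
theorem singleton_verification
    {Ω : Type} [MeasurableSpace Ω] (P : Measure Ω) [IsProbabilityMeasure P]
    (Δ : ℝ) (b : ℕ) (hΔ : 0 < Δ) (hb : 0 < b)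
    (P₂ n : ℕ) (V : Fin P₂ → Fin n → Ω → ℝ)
    (hindep : iIndepFun
      (fun p : Fin P₂ × Fin n => V p.1 p.2) P)
    (hdist : ∀ i j, Measure.map (V i j) P =
      (1/2 : ENNReal) • Measure.dirac (1 : ℝ) + (1/2 : ENNReal) • Measure.dirac (-1 : ℝ))
    (h : Fin n → ℝ) (hh : ∀ j, h j = 0 ∨ h j = 1)
    (β : Fin n → ℝ) (hβ : ∀ j, ∃ k : ℤ, 1 ≤ |k| ∧ |k| ≤ (b : ℤ) ∧ β j = (k : ℝ) * Δ)
    (a : ℤ) (ha : 1 ≤ |a| ∧ |a| ≤ (b : ℤ)) (j₀ : Fin n)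
    (hx : (fun j => h j * β j) ≠ (fun j => if j = j₀ then (a : ℝ) * Δ else 0)) :
    P {ω | ∀ i : Fin P₂, ∑ j, V i j ω * (h j * β j) = (a : ℝ) * Δ * V i j₀ ω}
      ≤ ENNReal.ofReal (2 * Real.exp (-(P₂ : ℝ) / 24)) :=
  singleton_verification_general P Δ P₂ n V hindep hdist h β a j₀ hx
end

section
/- If (d−1)·Q·λ·e^{−λ} > 1, then there exists t ∈ (0,1) with f(t) = t. -/
/-!
The map `f` has `f 0 > 0` and `f 1 = 1`, and its slope at `1` is `(d-1) Q λ e^{-λ} > 1`, so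
`f t < t` for `t` slightly below `1`. The intermediate value theorem applied to `f t - t`
then gives a fixed point in `(0, 1)`.
-/

open Real Set Filter Topology

theorem exists_mem_Ioo_eq_zero_of_hasDerivAt_pos {g : ℝ → ℝ} {a b g' : ℝ} (hab : a < b)
    (hg : ContinuousOn g (Icc a b)) (ha : 0 < g a) (hb : g b = 0) (hg' : HasDerivAt g g' b)
    (hpos : 0 < g') : ∃ t ∈ Ioo a b, g t = 0 := by
  have hslope : ∀ᶠ t in 𝓝[<] b, 0 < slope g b t :=
    nhdsLT_le_nhdsNE b <|
      (hasDerivAt_iff_tendsto_slope.mp hg').eventually (eventually_gt_nhds hpos)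
  obtain ⟨c, hc_slope, hc⟩ := (hslope.and (Ioo_mem_nhdsLT hab)).exists
  have hgc : g c < 0 := neg_of_slope_pos hc.2 hc_slope hb
  obtain ⟨t, ht, hgt⟩ := intermediate_value_Ioo' hc.1.le (hg.mono (Icc_subset_Icc_right hc.2.le))
    ⟨hgc, ha⟩
  exact ⟨t, ⟨ht.1, ht.2.trans hc.2⟩, hgt⟩

noncomputable def densityEvolution (Q lam : ℝ) (n : ℕ) (t : ℝ) : ℝ :=
  (1 - Q * (exp (-lam * t) - exp (-lam))) ^ n

theorem continuous_densityEvolution (Q lam : ℝ) (n : ℕ) :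
    Continuous (densityEvolution Q lam n) := by
  unfold densityEvolution; fun_prop

theorem densityEvolution_one (Q lam : ℝ) (n : ℕ) : densityEvolution Q lam n 1 = 1 := by
  simp [densityEvolution]

theorem densityEvolution_zero_pos {Q lam : ℝ} (hQ : Q ≤ 1) (hlam : 0 < lam) (n : ℕ) :
    0 < densityEvolution Q lam n 0 := by
  have h1 : exp (-lam) < 1 := exp_lt_one_iff.mpr (neg_neg_of_pos hlam)
  have h0 := exp_pos (-lam)
  unfold densityEvolution
  apply pow_pos
  simp only [mul_zero, exp_zero]
  nlinarith

theorem hasDerivAt_densityEvolution (Q lam : ℝ) (n : ℕ) (t : ℝ) :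
    HasDerivAt (densityEvolution Q lam n)
      (n * (1 - Q * (exp (-lam * t) - exp (-lam))) ^ (n - 1) * (Q * lam * exp (-lam * t))) t := by
  have hexp : HasDerivAt (fun s => exp (-lam * s)) (exp (-lam * t) * -lam) t := by
    simpa using ((hasDerivAt_id t).const_mul (-lam)).exp
  exact ((((hexp.sub_const (exp (-lam))).const_mul Q).const_sub 1).fun_pow n).congr_deriv (by ring)

theorem hasDerivAt_densityEvolution_one (Q lam : ℝ) (n : ℕ) :
    HasDerivAt (densityEvolution Q lam n) (n * Q * lam * exp (-lam)) 1 := by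
  convert hasDerivAt_densityEvolution Q lam n 1 using 1
  simp only [mul_one, sub_self, mul_zero, sub_zero, one_pow, mul_assoc]

/-- If `(d−1)·Q·λ·e^{−λ} > 1`, the density evolution map
`f(t) = (1 − Q(e^{−λt} − e^{−λ}))^{d−1}` has a fixed point in `(0,1)`. -/
theorem density_evolution_fixed_point (Q lam : ℝ) (d : ℕ)
    (hQ : Q ∈ Set.Ioc (0 : ℝ) 1) (hlam : 0 < lam) (hd : 2 ≤ d)
    (h : ((d : ℝ) - 1) * Q * lam * Real.exp (-lam) > 1) :
    ∃ t ∈ Set.Ioo (0 : ℝ) 1,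
      (1 - Q * (Real.exp (-lam * t) - Real.exp (-lam))) ^ (d - 1) = t := by
  have hderiv := (hasDerivAt_densityEvolution_one Q lam (d - 1)).sub (hasDerivAt_id 1)
  rw [Nat.cast_pred (by omega)] at hderiv
  obtain ⟨t, ht, hfix⟩ := exists_mem_Ioo_eq_zero_of_hasDerivAt_pos zero_lt_one
    ((continuous_densityEvolution Q lam (d - 1)).sub continuous_id).continuousOn
    (by simpa using densityEvolution_zero_pos hQ.2 hlam (d - 1))
    (by simp [densityEvolution_one]) hderiv (by linarith)
  exact ⟨t, ht, sub_eq_zero.mp hfix⟩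
end

section
/- Let d ≥ 2 be an integer and suppose p* ∈ (0,1) satisfies f_d(p*) = p* and f_d(s) < s for all s ∈ (p*, 1). Then for every integer C ≥ 2, every fixed point t ∈ (0,1) of f_{Cd} (i.e., every t ∈ (0,1) with g(t)^{Cd−1} = t) satisfies t ≤ (p*)^C. -/
open Real

/-- If `p* ∈ (0,1)` is a fixed point of `f_d(t) = g(t)^{d−1}` (where
`g(t) = 1 − Q(e^{−λt} − e^{−λ})`) and `f_d(s) < s` on `(p*,1)`, then for every integer
`C ≥ 2` every fixed point `t ∈ (0,1)` of `f_{Cd}` satisfies `t ≤ (p*)^C`. -/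
theorem density_evolution_fixed_point_decay (Q lam : ℝ)
    (hQ : Q ∈ Set.Ioc (0 : ℝ) 1) (hlam : 0 < lam)
    (d : ℕ) (hd : 2 ≤ d) (pstar : ℝ) (hp : pstar ∈ Set.Ioo (0 : ℝ) 1)
    (hfix : (1 - Q * (Real.exp (-lam * pstar) - Real.exp (-lam))) ^ (d - 1) = pstar)
    (hlt : ∀ s ∈ Set.Ioo pstar 1,
      (1 - Q * (Real.exp (-lam * s) - Real.exp (-lam))) ^ (d - 1) < s) :
    ∀ C : ℕ, 2 ≤ C → ∀ t ∈ Set.Ioo (0 : ℝ) 1,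
      (1 - Q * (Real.exp (-lam * t) - Real.exp (-lam))) ^ (C * d - 1) = t →
      t ≤ pstar ^ C := by
  obtain ⟨hQ0, hQ1⟩ := hQ
  obtain ⟨hp0, hp1⟩ := hp
  intro C hC t ht hfixt
  obtain ⟨ht0, ht1⟩ := ht
  by_contra hcon
  push_neg at hcon
  have hCpos : (0 : ℝ) < (C : ℝ) := by positivity
  set s : ℝ := t ^ ((1 : ℝ) / C) with hs_def
  have hs0 : 0 < s := Real.rpow_pos_of_pos ht0 _
  have hs1 : s < 1 := Real.rpow_lt_one (le_of_lt ht0) ht1 (by positivity)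
  have hsC : s ^ C = t := by
    rw [hs_def, ← Real.rpow_natCast (t ^ ((1:ℝ)/C)) C, ← Real.rpow_mul (le_of_lt ht0)]
    rw [one_div, inv_mul_cancel₀ (ne_of_gt hCpos), Real.rpow_one]
  have hps : pstar < s := by
    have h1 : (pstar ^ C : ℝ) < t := hcon
    have h2 : (pstar ^ C : ℝ) ^ ((1:ℝ)/C) < s :=
      Real.rpow_lt_rpow (by positivity) h1 (by positivity)
    have h3 : (pstar ^ C : ℝ) ^ ((1:ℝ)/C) = pstar := by
      rw [← Real.rpow_natCast pstar C, ← Real.rpow_mul (le_of_lt hp0)]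
      rw [mul_one_div, div_self (ne_of_gt hCpos), Real.rpow_one]
    rwa [h3] at h2
  -- g bounds
  have gpos : ∀ x : ℝ, 0 ≤ x →
      0 < 1 - Q * (Real.exp (-lam * x) - Real.exp (-lam)) := by
    intro x hx
    have h1 : Real.exp (-lam * x) ≤ 1 := by
      apply Real.exp_le_one_iff.mpr
      nlinarith
    have h2 : 0 < Real.exp (-lam) := Real.exp_pos _
    nlinarith [Real.exp_nonneg (-lam * x)]
  have gmono : Real.exp (-lam * s) ≤ Real.exp (-lam * t) := by
    have : t ≤ s := by
      calc t = s ^ C := hsC.symm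
        _ ≤ s ^ 1 := pow_le_pow_of_le_one (le_of_lt hs0) (le_of_lt hs1) (by omega)
        _ = s := pow_one s
    apply Real.exp_le_exp.mpr
    nlinarith
  have hgt0 : 0 < 1 - Q * (Real.exp (-lam * t) - Real.exp (-lam)) := gpos t (le_of_lt ht0)
  have hgs0 : 0 < 1 - Q * (Real.exp (-lam * s) - Real.exp (-lam)) := gpos s (le_of_lt hs0)
  have hgs1 : 1 - Q * (Real.exp (-lam * s) - Real.exp (-lam)) < 1 := by
    have : Real.exp (-lam) < Real.exp (-lam * s) := by
      apply Real.exp_lt_exp.mpr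
      nlinarith
    nlinarith
  have hgts : 1 - Q * (Real.exp (-lam * t) - Real.exp (-lam)) ≤
      1 - Q * (Real.exp (-lam * s) - Real.exp (-lam)) := by nlinarith
  have hfds : (1 - Q * (Real.exp (-lam * s) - Real.exp (-lam))) ^ (d - 1) < s :=
    hlt s ⟨hps, hs1⟩
  have hexp : C * (d - 1) ≤ C * d - 1 := by
    have h1 : C * (d - 1) = C * d - C * 1 := by rw [Nat.mul_sub]
    have h2 : C ≤ C * d := Nat.le_mul_of_pos_right C (by omega)
    omega
  have key : t < t := by
    calc t = (1 - Q * (Real.exp (-lam * t) - Real.exp (-lam))) ^ (C * d - 1) := hfixt.symm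
      _ ≤ (1 - Q * (Real.exp (-lam * s) - Real.exp (-lam))) ^ (C * d - 1) :=
          pow_le_pow_left₀ (le_of_lt hgt0) hgts _
      _ ≤ (1 - Q * (Real.exp (-lam * s) - Real.exp (-lam))) ^ (C * (d - 1)) :=
          pow_le_pow_of_le_one (le_of_lt hgs0) (le_of_lt hgs1) hexp
      _ = ((1 - Q * (Real.exp (-lam * s) - Real.exp (-lam))) ^ (d - 1)) ^ C := by
          rw [← pow_mul, Nat.mul_comm]
      _ < s ^ C := pow_lt_pow_left₀ hfds (by positivity) (by omega)
      _ = t := hsC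
  exact absurd key (lt_irrefl t)
end
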